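/- arXiv:1308.6111 — 2 statements merged into one kernel-verified Lean document; each statement's English description precedes it below -/
import Mathlib

section
/- Let T be a measure-preserving transformation of a probability space (X, ℱ, μ) and let 𝔸 : ℕ × X → ℝ^{d×d} be a measurable linear cocycle over T such that x ↦ log⁺‖𝔸(1,x)‖ is μ-integrable. Then for μ-a.e. x ∈ X the following holds: if there exists a vector v ∈ ℝ^d such that ‖𝔸(n,x)v‖ does not converge to 0 as n → ∞ (i.e., the stable space V^s(x) = {v : ‖𝔸(n,x)v‖ → 0} is a proper subspace of ℝ^d), then limsup_{n→∞} ‖𝔸(n,x)‖ ≥ 1, where ‖𝔸(n,x)‖ is the operator norm. -/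
open MeasureTheory Filter Topology

noncomputable section

instance matMeasurableSpace {d : ℕ} : MeasurableSpace (Matrix (Fin d) (Fin d) ℝ) :=
  inferInstanceAs (MeasurableSpace (Fin d → Fin d → ℝ))

/-- The action of a `d × d` real matrix on `ℝ^d` with the Euclidean norm. -/
def matApp {d : ℕ} (B : Matrix (Fin d) (Fin d) ℝ) (v : EuclideanSpace ℝ (Fin d)) :
    EuclideanSpace ℝ (Fin d) :=
  Matrix.toEuclideanLin B v

/-- The operator norm of a `d × d` real matrix induced by the Euclidean norm on `ℝ^d`. -/
def matOpNorm {d : ℕ} (B : Matrix (Fin d) (Fin d) ℝ) : ℝ :=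
  ‖LinearMap.toContinuousLinearMap (Matrix.toEuclideanLin B)‖

/-- The natural logarithm with values in `EReal`, with the convention `log 0 = -∞`. -/
def elog (t : ℝ) : EReal := if t = 0 then ⊥ else ((Real.log t : ℝ) : EReal)

/-- The operator norm of the restriction of (the linear map induced by) `B` to a set `S`:
`sup {‖Bv‖ : v ∈ S, ‖v‖ = 1}`. -/
def restNorm {d : ℕ} (B : Matrix (Fin d) (Fin d) ℝ) (S : Set (EuclideanSpace ℝ (Fin d))) : ℝ :=
  sSup {r | ∃ v ∈ S, ‖v‖ = 1 ∧ r = ‖matApp B v‖}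

/-- The stable space of the cocycle `𝔸` over the point `x`. -/
def stableSet {X : Type*} {d : ℕ} (𝔸 : ℕ → X → Matrix (Fin d) (Fin d) ℝ) (x : X) :
    Set (EuclideanSpace ℝ (Fin d)) :=
  {v | Tendsto (fun n => ‖matApp (𝔸 n x) v‖) atTop (𝓝 0)}

/-! If `limsup ‖𝔸(n,x)‖ < q < 1`, then `x` lies in `S = {y | ‖𝔸(n,y)‖ ≤ q for all n ≥ N}` for
some `N`. By Poincaré recurrence almost every point of `S` returns to `S` infinitely often, and
since the norm is submultiplicative along the cocycle, every return multiplies the bound on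
`‖𝔸(n,x)‖` by `q`. Hence `‖𝔸(n,x)‖ → 0`, and then `𝔸(n,x)v → 0` for every `v`. -/

instance matBorelSpace {d : ℕ} : BorelSpace (Matrix (Fin d) (Fin d) ℝ) :=
  inferInstanceAs (BorelSpace (Fin d → Fin d → ℝ))

section MatrixNorm

variable {d : ℕ}

lemma matOpNorm_eq_norm_toEuclideanCLM (B : Matrix (Fin d) (Fin d) ℝ) :
    matOpNorm B = ‖Matrix.toEuclideanCLM (n := Fin d) (𝕜 := ℝ) B‖ :=
  rfl

lemma matOpNorm_nonneg (B : Matrix (Fin d) (Fin d) ℝ) : 0 ≤ matOpNorm B :=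
  norm_nonneg _

lemma norm_matApp_le (B : Matrix (Fin d) (Fin d) ℝ) (v : EuclideanSpace ℝ (Fin d)) :
    ‖matApp B v‖ ≤ matOpNorm B * ‖v‖ :=
  (Matrix.toEuclideanCLM (n := Fin d) (𝕜 := ℝ) B).le_opNorm v

lemma matOpNorm_mul_le (B C : Matrix (Fin d) (Fin d) ℝ) :
    matOpNorm (B * C) ≤ matOpNorm B * matOpNorm C := by
  simp only [matOpNorm_eq_norm_toEuclideanCLM, map_mul]
  exact norm_mul_le _ _

lemma continuous_matOpNorm : Continuous (matOpNorm : Matrix (Fin d) (Fin d) ℝ → ℝ) :=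
  continuous_norm.comp <| LinearMap.continuous_of_finiteDimensional
    (Matrix.toEuclideanCLM (n := Fin d) (𝕜 := ℝ)).toAlgEquiv.toLinearEquiv.toLinearMap

end MatrixNorm

section SubmultiplicativeCocycle

variable {X : Type*} {T : X → X} {a : ℕ → X → ℝ}

def tailBoundSet (a : ℕ → X → ℝ) (q : ℝ) (N : ℕ) : Set X :=
  {x | ∀ n, N ≤ n → a n x ≤ q}

lemma eventually_le_pow_of_frequently_iterate_mem_tailBoundSet
    (hsub : ∀ x m n, a (m + n) x ≤ a n (T^[m] x) * a m x) (hnonneg : ∀ n x, 0 ≤ a n x)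
    {q : ℝ} {N : ℕ} {x : X} (hx : x ∈ tailBoundSet a q N)
    (hrec : ∃ᶠ m in atTop, T^[m] x ∈ tailBoundSet a q N) (k : ℕ) :
    ∀ᶠ n in atTop, a n x ≤ q ^ (k + 1) := by
  induction k with
  | zero => simpa using eventually_atTop.2 ⟨N, hx⟩
  | succ k ih =>
    obtain ⟨M, hM⟩ := eventually_atTop.1 ih
    obtain ⟨m, hMm, hm⟩ := frequently_atTop.1 hrec M
    have hq : 0 ≤ q := (hnonneg N x).trans (hx N le_rfl)
    refine eventually_atTop.2 ⟨m + N, fun n hn => ?_⟩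
    obtain ⟨n, rfl⟩ := Nat.exists_eq_add_of_le (le_of_add_le_left hn)
    calc a (m + n) x ≤ a n (T^[m] x) * a m x := hsub x m n
      _ ≤ q * q ^ (k + 1) := mul_le_mul (hm n (by omega)) (hM m hMm) (hnonneg m x) hq
      _ = q ^ (k + 1 + 1) := by ring

lemma tendsto_zero_of_frequently_iterate_mem_tailBoundSet
    (hsub : ∀ x m n, a (m + n) x ≤ a n (T^[m] x) * a m x) (hnonneg : ∀ n x, 0 ≤ a n x)
    {q : ℝ} (hq : q < 1) {N : ℕ} {x : X} (hx : x ∈ tailBoundSet a q N)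
    (hrec : ∃ᶠ m in atTop, T^[m] x ∈ tailBoundSet a q N) :
    Tendsto (fun n => a n x) atTop (𝓝 0) := by
  have hq0 : 0 ≤ q := (hnonneg N x).trans (hx N le_rfl)
  refine tendsto_order.2 ⟨fun ε hε => .of_forall fun n => hε.trans_le (hnonneg n x),
    fun ε hε => ?_⟩
  obtain ⟨k, hk⟩ := exists_pow_lt_of_lt_one hε hq
  filter_upwards
    [eventually_le_pow_of_frequently_iterate_mem_tailBoundSet hsub hnonneg hx hrec k] with n hn
  exact hn.trans_lt ((pow_le_pow_of_le_one hq0 hq.le k.le_succ).trans_lt hk)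

lemma measurableSet_tailBoundSet [MeasurableSpace X] (ha : ∀ n, Measurable (a n))
    (q : ℝ) (N : ℕ) : MeasurableSet (tailBoundSet a q N) := by
  simp only [tailBoundSet, Set.ofPred_forall]
  exact .iInter fun n => .iInter fun _ => measurableSet_le (ha n) measurable_const

lemma ae_limsup_lt_one_imp_tendsto_zero [MeasurableSpace X] {μ : Measure X} [IsFiniteMeasure μ]
    (hT : MeasurePreserving T μ μ) (ha : ∀ n, Measurable (a n))
    (hsub : ∀ x m n, a (m + n) x ≤ a n (T^[m] x) * a m x) (hnonneg : ∀ n x, 0 ≤ a n x) :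
    ∀ᵐ x ∂μ, limsup (fun n => (a n x : EReal)) atTop < 1 →
      Tendsto (fun n => a n x) atTop (𝓝 0) := by
  have hrec : ∀ᵐ x ∂μ, ∀ (q : ℚ) (N : ℕ), x ∈ tailBoundSet a q N →
      ∃ᶠ m in atTop, T^[m] x ∈ tailBoundSet a q N := by
    simp only [ae_all_iff]
    exact fun q N => hT.conservative.ae_mem_imp_frequently_image_mem
      (measurableSet_tailBoundSet ha q N).nullMeasurableSet
  filter_upwards [hrec] with x hx hlim
  obtain ⟨q, hlimq, hq1⟩ := EReal.exists_rat_btwn_of_lt hlim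
  obtain ⟨N, hN⟩ := eventually_atTop.1 (eventually_lt_of_limsup_lt hlimq)
  have hxN : x ∈ tailBoundSet a q N := fun n hn => (EReal.coe_lt_coe_iff.1 (hN n hn)).le
  exact tendsto_zero_of_frequently_iterate_mem_tailBoundSet hsub hnonneg
    (by exact_mod_cast hq1) hxN (hx q N hxN)

end SubmultiplicativeCocycle

theorem stmt5_general {X : Type*} [MeasurableSpace X] {d : ℕ}
    (μ : Measure X) [IsProbabilityMeasure μ] (T : X → X)
    (hT : MeasurePreserving T μ μ)
    (𝔸 : ℕ → X → Matrix (Fin d) (Fin d) ℝ)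
    (hmeas : Measurable fun p : ℕ × X => 𝔸 p.1 p.2)
    (hcoc : ∀ x m n, 𝔸 (m + n) x = 𝔸 n (T^[m] x) * 𝔸 m x) :
    ∀ᵐ x ∂μ,
      (∃ v : EuclideanSpace ℝ (Fin d),
        ¬ Tendsto (fun n => ‖matApp (𝔸 n x) v‖) atTop (𝓝 0)) →
      (1 : EReal) ≤ limsup (fun n : ℕ => ((matOpNorm (𝔸 n x) : ℝ) : EReal)) atTop := by
  have hdecay := ae_limsup_lt_one_imp_tendsto_zero (a := fun n x => matOpNorm (𝔸 n x)) hT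
    (fun n => continuous_matOpNorm.measurable.comp (hmeas.comp measurable_prodMk_left))
    (fun x m n => (hcoc x m n).symm ▸ matOpNorm_mul_le _ _) (fun n x => matOpNorm_nonneg _)
  filter_upwards [hdecay] with x hx ⟨v, hv⟩
  by_contra hlim
  refine hv (squeeze_zero (fun n => norm_nonneg _) (fun n => norm_matApp_le _ v) ?_)
  simpa using (hx (not_le.1 hlim)).mul_const ‖v‖

theorem stmt5 {X : Type*} [MeasurableSpace X] {d : ℕ}
    (μ : Measure X) [IsProbabilityMeasure μ] (T : X → X)
    (hT : MeasurePreserving T μ μ)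
    (𝔸 : ℕ → X → Matrix (Fin d) (Fin d) ℝ)
    (hmeas : Measurable fun p : ℕ × X => 𝔸 p.1 p.2)
    (hcoc0 : ∀ x, 𝔸 0 x = 1)
    (hcoc : ∀ x m n, 𝔸 (m + n) x = 𝔸 n (T^[m] x) * 𝔸 m x)
    (hint : Integrable (fun x => max 0 (Real.log (matOpNorm (𝔸 1 x)))) μ) :
    ∀ᵐ x ∂μ,
      (∃ v : EuclideanSpace ℝ (Fin d),
        ¬ Tendsto (fun n => ‖matApp (𝔸 n x) v‖) atTop (𝓝 0)) →
      (1 : EReal) ≤ limsup (fun n : ℕ => ((matOpNorm (𝔸 n x) : ℝ) : EReal)) atTop :=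
  stmt5_general μ T hT 𝔸 hmeas hcoc

end
end

section
/- Let T be a measurable transformation of a measurable space (X, ℱ), let 𝔸 : ℕ × X → ℝ^{d×d} be a measurable linear cocycle over T, and let μ be a probability measure on (X, ℱ) preserved by T. For x ∈ X let V^s(x) = {v ∈ ℝ^d : ‖𝔸(n,x)v‖ → 0 as n → ∞}, a linear subspace of ℝ^d. Then for μ-a.e. x ∈ X and every n ≥ 1, dim V^s(x) = dim V^s(T^n x). -/
open MeasureTheory Filter Topology

noncomputable section

/-
`V^s(x)` is the preimage of `V^s(T x)` under `𝔸(1, x)`, so `dim V^s(T x) ≤ dim V^s(x)`. The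
function `x ↦ dim V^s(x)` is measurable: `dim V^s(x) ≥ k` iff for every `ε > 0` some orthonormal
`k`-frame is eventually `ε`-contracted, which is a countable family of closed constraints on the
compact set of frames. (For "if", the vectors with bounded orbits form a subspace on which
Banach–Steinhaus bounds `𝔸(n, x)` uniformly, so a cluster point of the almost contracted frames is
contracted.) Finally, an `ℕ`-valued measurable function that does not increase along the orbits of
a measure-preserving map is a.e. invariant: each superlevel set contains its preimage, which has
the same measure.
-/

open Module

section Orthonormal

variable {E : Type*} [NormedAddCommGroup E] [InnerProductSpace ℝ E] {ι : Type*}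

theorem isClosed_setOf_orthonormal : IsClosed {v : ι → E | Orthonormal ℝ v} := by
  classical
  simp only [orthonormal_iff_ite, Set.ofPred_forall]
  exact isClosed_iInter fun i => isClosed_iInter fun j =>
    isClosed_eq ((continuous_apply i).inner (continuous_apply j)) continuous_const

theorem isCompact_setOf_orthonormal [FiniteDimensional ℝ E] :
    IsCompact {v : ι → E | Orthonormal ℝ v} :=
  (isCompact_univ_pi fun _ => isCompact_closedBall (0 : E) 1).of_isClosed_subset
    isClosed_setOf_orthonormal fun _ hv i _ => by simp [hv.1 i]

end Orthonormal

theorem Submodule.finrank_le_finrank_comap {K V : Type*} [DivisionRing K] [AddCommGroup V]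
    [Module K V] [FiniteDimensional K V] (g : V →ₗ[K] V) (W : Submodule K V) :
    finrank K W ≤ finrank K (W.comap g) := by
  have h_rank_nullity := LinearMap.finrank_range_add_finrank_ker (W.mkQ ∘ₗ g)
  rw [LinearMap.ker_comp, Submodule.ker_mkQ] at h_rank_nullity
  have h_quot := W.finrank_quotient_add_finrank
  have h_range := Submodule.finrank_le (LinearMap.range (W.mkQ ∘ₗ g))
  omega

section StableSubspace

variable {E F G : Type*} [NormedAddCommGroup E] [NormedSpace ℝ E] [NormedAddCommGroup F]
  [NormedSpace ℝ F] [NormedAddCommGroup G] [NormedSpace ℝ G]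

def stableSubspace (A : ℕ → E →L[ℝ] F) : Submodule ℝ E where
  carrier := {v | Tendsto (fun n => A n v) atTop (𝓝 0)}
  zero_mem' := by simp
  add_mem' {u v} hu hv := by simpa using hu.add hv
  smul_mem' c v hv := by simpa using hv.const_smul c

theorem mem_stableSubspace {A : ℕ → E →L[ℝ] F} {v : E} :
    v ∈ stableSubspace A ↔ Tendsto (fun n => A n v) atTop (𝓝 0) := Iff.rfl

theorem stableSubspace_eq_comap {A : ℕ → E →L[ℝ] F} {B : ℕ → G →L[ℝ] F} (g : E →L[ℝ] G)
    (h : ∀ n, A (n + 1) = (B n).comp g) :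
    stableSubspace A = (stableSubspace B).comap (g : E →ₗ[ℝ] G) := by
  ext v
  simp only [Submodule.mem_comap, mem_stableSubspace]
  rw [← tendsto_add_atTop_iff_nat 1]
  simp [h]

end StableSubspace

section Rigidity

variable {E F : Type*} [NormedAddCommGroup E] [InnerProductSpace ℝ E] [FiniteDimensional ℝ E]
  [NormedAddCommGroup F] [NormedSpace ℝ F] {ι : Type*} {A : ℕ → E →L[ℝ] F}

theorem exists_orthonormal_tendsto_zero_of_norm_le {C : ℝ} (hC : ∀ n, ‖A n‖ ≤ C)
    (h : ∀ ε > 0, ∃ v : ι → E, Orthonormal ℝ v ∧ ∀ i, ∀ᶠ n in atTop, ‖A n (v i)‖ ≤ ε) :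
    ∃ v : ι → E, Orthonormal ℝ v ∧ ∀ i, Tendsto (fun n => A n (v i)) atTop (𝓝 0) := by
  choose v hv_on hv_small using fun j : ℕ => h (1 / (j + 1)) Nat.one_div_pos_of_nat
  obtain ⟨w, hw_on, hw⟩ := isCompact_setOf_orthonormal.exists_mapClusterPt (f := atTop)
    (tendsto_principal.2 (Eventually.of_forall hv_on))
  refine ⟨w, hw_on, fun i => NormedAddGroup.tendsto_nhds_zero.2 fun ε hε => ?_⟩
  have h_near : ∀ᶠ u in 𝓝 w, C * ‖w i - u i‖ < ε / 2 := by
    have h_cont : Continuous fun u : ι → E => C * ‖w i - u i‖ := by fun_prop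
    have : Tendsto (fun u : ι → E => C * ‖w i - u i‖) (𝓝 w) (𝓝 0) := by
      simpa using h_cont.tendsto w
    exact this.eventually (gt_mem_nhds (half_pos hε))
  have h_tol : ∀ᶠ j : ℕ in atTop, 1 / ((j : ℝ) + 1) < ε / 2 :=
    tendsto_one_div_add_atTop_nhds_zero_nat.eventually (gt_mem_nhds (half_pos hε))
  obtain ⟨j, hj_near, hj_tol⟩ := ((hw.frequently h_near).and_eventually h_tol).exists
  filter_upwards [hv_small j i] with n hn
  calc ‖A n (w i)‖ ≤ ‖A n (v j i)‖ + ‖A n (w i - v j i)‖ := by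
        simpa only [map_sub] using norm_le_insert' (A n (w i)) (A n (v j i))
    _ ≤ 1 / ((j : ℝ) + 1) + C * ‖w i - v j i‖ :=
        add_le_add hn (((A n).le_opNorm _).trans (by gcongr; exact hC n))
    _ < ε / 2 + ε / 2 := add_lt_add hj_tol hj_near
    _ = ε := add_halves ε

theorem exists_orthonormal_tendsto_zero
    (h : ∀ ε > 0, ∃ v : ι → E, Orthonormal ℝ v ∧ ∀ i, ∀ᶠ n in atTop, ‖A n (v i)‖ ≤ ε) :
    ∃ v : ι → E, Orthonormal ℝ v ∧ ∀ i, Tendsto (fun n => A n (v i)) atTop (𝓝 0) := by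
  -- on the subspace of vectors with bounded orbits, Banach–Steinhaus bounds `‖A n‖` uniformly
  let B : Submodule ℝ E :=
    (lpSubmodule ℝ (fun _ : ℕ => F) ⊤).comap (LinearMap.pi fun n => (A n : E →ₗ[ℝ] F))
  have mem_B {u : E} : u ∈ B ↔ BddAbove (Set.range fun n => ‖A n u‖) := memℓp_infty_iff
  obtain ⟨C, hC⟩ := banach_steinhaus (g := fun n => (A n).comp B.subtypeL) fun u =>
    (mem_B.1 u.2).imp fun _ hC n => hC ⟨n, rfl⟩
  have h_B : ∀ ε > 0, ∃ v : ι → B, Orthonormal ℝ v ∧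
      ∀ i, ∀ᶠ n in atTop, ‖(A n).comp B.subtypeL (v i)‖ ≤ ε := fun ε hε => by
    obtain ⟨v, hv_on, hv_small⟩ := h ε hε
    have hv_B : ∀ i, v i ∈ B := fun i => mem_B.2
      (isBoundedUnder_of_eventually_le (hv_small i)).bddAbove_range
    refine ⟨fun i => ⟨v i, hv_B i⟩, ?_, hv_small⟩
    exact (B.subtypeₗᵢ.orthonormal_comp_iff (v := fun i => (⟨v i, hv_B i⟩ : B))).1 hv_on
  obtain ⟨w, hw_on, hw⟩ := exists_orthonormal_tendsto_zero_of_norm_le hC h_B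
  exact ⟨B.subtypeₗᵢ ∘ w, hw_on.comp_linearIsometry _, hw⟩

theorem le_finrank_stableSubspace_iff {k : ℕ} :
    k ≤ finrank ℝ (stableSubspace A) ↔
      ∀ ε > 0, ∃ v : Fin k → E, Orthonormal ℝ v ∧ ∀ᶠ n in atTop, ∀ i, ‖A n (v i)‖ ≤ ε := by
  constructor
  · intro hk ε hε
    let b := stdOrthonormalBasis ℝ (stableSubspace A)
    refine ⟨fun i => b (Fin.castLE hk i), ?_, eventually_all.2 fun i => ?_⟩
    · exact (b.orthonormal.comp _ (Fin.castLE_injective hk)).comp_linearIsometry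
        (stableSubspace A).subtypeₗᵢ
    · exact (tendsto_zero_iff_norm_tendsto_zero.1 (b (Fin.castLE hk i)).2).eventually_le_const
        hε
  · intro h
    obtain ⟨v, hv_on, hv⟩ := exists_orthonormal_tendsto_zero fun ε hε =>
      (h ε hε).imp fun _ ⟨hv_on, hv_small⟩ => ⟨hv_on, fun i => hv_small.mono fun _ hn => hn i⟩
    calc k = finrank ℝ (Submodule.span ℝ (Set.range v)) := by
          rw [finrank_span_eq_card hv_on.linearIndependent, Fintype.card_fin]
      _ ≤ finrank ℝ (stableSubspace A) :=
          Submodule.finrank_mono (Submodule.span_le.2 (Set.range_subset_iff.2 hv))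

end Rigidity

theorem measurableSet_exists_mem_forall_le {X Y ι : Type*} [MeasurableSpace X]
    [TopologicalSpace Y] [TopologicalSpace.PseudoMetrizableSpace Y] [Countable ι]
    {K : Set Y} (hK : IsCompact K) {g : ι → X → Y → ℝ} (hg_cont : ∀ i x, Continuous (g i x))
    (hg_meas : ∀ i y, Measurable fun x => g i x y) (c : ℝ) :
    MeasurableSet {x | ∃ y ∈ K, ∀ i, g i x y ≤ c} := by
  classical
  obtain ⟨D, hDK, hD, hKD⟩ := hK.isSeparable.exists_countable_dense_subset
  have key : {x | ∃ y ∈ K, ∀ i, g i x y ≤ c} =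
      ⋂ (m : ℕ) (s : Finset ι), ⋃ y ∈ D, {x | ∀ i ∈ s, g i x y < c + 1 / (m + 1)} := by
    ext x
    simp only [Set.mem_ofPred_eq, Set.mem_iInter, Set.mem_iUnion, exists_prop]
    constructor
    · rintro ⟨y, hyK, hy⟩ m s
      have hopen : IsOpen {z | ∀ i ∈ s, g i x z < c + 1 / (m + 1)} := by
        simpa only [Set.ofPred_forall] using
          isOpen_biInter_finset fun i _ => isOpen_lt (hg_cont i x) continuous_const
      obtain ⟨z, hz, hzD⟩ := mem_closure_iff.1 (hKD hyK) _ hopen fun i _ =>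
        (hy i).trans_lt (lt_add_of_pos_right c Nat.one_div_pos_of_nat)
      exact ⟨z, hzD, hz⟩
    · intro h
      -- finite intersection property of `K`, with tolerance `1 / (m + 1)`
      obtain ⟨y, hyK, hy⟩ := hK.inter_iInter_nonempty
        (fun p : ι × ℕ => {z | g p.1 x z ≤ c + 1 / (p.2 + 1)})
        (fun p => isClosed_le (hg_cont _ _) continuous_const) fun u => by
          obtain ⟨z, hzD, hz⟩ := h (u.sup Prod.snd) (u.image Prod.fst)
          refine ⟨z, hDK hzD, Set.mem_iInter₂.2 fun p hp => ?_⟩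
          have hle : (p.2 : ℝ) ≤ u.sup Prod.snd := by
            exact_mod_cast u.le_sup (f := Prod.snd) hp
          calc g p.1 x z ≤ c + 1 / ((u.sup Prod.snd : ℕ) + 1) :=
                (hz p.1 (Finset.mem_image_of_mem _ hp)).le
            _ ≤ c + 1 / (p.2 + 1) := by gcongr
      have h_tol : Tendsto (fun m : ℕ => c + 1 / ((m : ℝ) + 1)) atTop (𝓝 c) := by
        simpa using tendsto_const_nhds.add (tendsto_one_div_add_atTop_nhds_zero_nat (𝕜 := ℝ))
      exact ⟨y, hyK, fun i => ge_of_tendsto' h_tol fun m => Set.mem_iInter.1 hy (i, m)⟩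
  rw [key]
  refine .iInter fun m => .iInter fun s => .biUnion hD fun y _ => ?_
  simp only [Set.ofPred_forall]
  exact .biInter s.countable_toSet fun i _ => measurableSet_lt (hg_meas i y) measurable_const

theorem measurable_finrank_stableSubspace {X E F : Type*} [MeasurableSpace X]
    [NormedAddCommGroup E] [InnerProductSpace ℝ E] [FiniteDimensional ℝ E]
    [NormedAddCommGroup F] [NormedSpace ℝ F] {A : X → ℕ → E →L[ℝ] F}
    (hA : ∀ n v, Measurable fun x => ‖A x n v‖) :
    Measurable fun x => finrank ℝ (stableSubspace (A x)) := by
  refine measurable_of_Ici fun k => ?_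
  have h_eq : (fun x => finrank ℝ (stableSubspace (A x))) ⁻¹' Set.Ici k =
      ⋂ j : ℕ, ⋃ N : ℕ, {x | ∃ v ∈ {v : Fin k → E | Orthonormal ℝ v},
        ∀ p : ℕ × Fin k, ‖A x (p.1 + N) (v p.2)‖ ≤ 1 / (j + 1)} := by
    ext x
    simp only [Set.mem_preimage, Set.mem_Ici, le_finrank_stableSubspace_iff, Set.mem_iInter,
      Set.mem_iUnion, Set.mem_ofPred_eq, eventually_atTop]
    constructor
    · intro h j
      obtain ⟨v, hv_on, N, hN⟩ := h _ Nat.one_div_pos_of_nat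
      exact ⟨N, v, hv_on, fun p => hN _ (Nat.le_add_left N p.1) p.2⟩
    · intro h ε hε
      obtain ⟨j, hj⟩ := exists_nat_one_div_lt hε
      obtain ⟨N, v, hv_on, hN⟩ := h j
      refine ⟨v, hv_on, N, fun n hn i => ?_⟩
      obtain ⟨m, rfl⟩ := Nat.exists_eq_add_of_le' hn
      exact (hN (m, i)).trans hj.le
  rw [h_eq]
  exact .iInter fun j => .iUnion fun N => measurableSet_exists_mem_forall_le
    (g := fun (p : ℕ × Fin k) x (v : Fin k → E) => ‖A x (p.1 + N) (v p.2)‖)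
    isCompact_setOf_orthonormal
    (fun p x => ((A x (p.1 + N)).continuous.comp (continuous_apply p.2)).norm)
    (fun p v => hA _ _) _

theorem MeasureTheory.MeasurePreserving.ae_forall_iterate_eq_of_comp_le {X : Type*}
    [MeasurableSpace X] {μ : Measure X} [IsFiniteMeasure μ] {T : X → X}
    (hT : MeasurePreserving T μ μ) {f : X → ℕ} (hf : Measurable f) (hle : ∀ x, f (T x) ≤ f x) :
    ∀ᵐ x ∂μ, ∀ n, f (T^[n] x) = f x := by
  have h_level : ∀ k, T ⁻¹' {x | k ≤ f x} =ᵐ[μ] {x | k ≤ f x} := fun k =>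
    have hS := measurableSet_le measurable_const hf
    ae_eq_of_subset_of_measure_ge (fun x hx => hx.trans (hle x))
      (hT.measure_preimage hS.nullMeasurableSet).ge
      (hS.preimage hT.measurable).nullMeasurableSet (measure_ne_top μ _)
  have h_step : ∀ᵐ x ∂μ, f (T x) = f x := by
    filter_upwards [ae_all_iff.2 h_level] with x hx
    exact le_antisymm (hle x) ((hx (f x)).mpr le_rfl)
  refine ae_all_iff.2 fun n => ?_
  induction n with
  | zero => simp
  | succ n ih =>
    filter_upwards [ih, (hT.iterate n).quasiMeasurePreserving.ae h_step] with x hx hTx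
    rw [Function.iterate_succ_apply', hTx, hx]

theorem stableSet_eq_stableSubspace {X : Type*} {d : ℕ}
    (𝔸 : ℕ → X → Matrix (Fin d) (Fin d) ℝ) (x : X) :
    stableSet 𝔸 x = stableSubspace fun n => Matrix.toEuclideanCLM (𝕜 := ℝ) (𝔸 n x) :=
  Set.ext fun _ => tendsto_zero_iff_norm_tendsto_zero.symm

theorem measurable_norm_toEuclideanCLM_apply {X : Type*} [MeasurableSpace X] {d : ℕ}
    {M : X → Matrix (Fin d) (Fin d) ℝ} (hM : Measurable M) (v : EuclideanSpace ℝ (Fin d)) :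
    Measurable fun x => ‖Matrix.toEuclideanCLM (𝕜 := ℝ) (M x) v‖ := by
  have h_cont : Continuous fun B : Fin d → Fin d → ℝ =>
      ‖Matrix.toEuclideanCLM (𝕜 := ℝ) (Matrix.of B) v‖ := by
    show Continuous fun B : Fin d → Fin d → ℝ =>
      ‖WithLp.toLp 2 ((Matrix.of B).mulVec (WithLp.ofLp v))‖
    fun_prop
  exact h_cont.measurable.comp hM

theorem stmt9_general {X : Type*} [MeasurableSpace X] {d : ℕ}
    (T : X → X)
    (𝔸 : ℕ → X → Matrix (Fin d) (Fin d) ℝ)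
    (hmeas : Measurable fun p : ℕ × X => 𝔸 p.1 p.2)
    (hcoc : ∀ x m n, 𝔸 (m + n) x = 𝔸 n (T^[m] x) * 𝔸 m x)
    (μ : Measure X) [IsProbabilityMeasure μ] (hT : MeasurePreserving T μ μ) :
    ∀ᵐ x ∂μ, ∀ n : ℕ, 1 ≤ n →
      Module.finrank ℝ (Submodule.span ℝ (stableSet 𝔸 x)) =
        Module.finrank ℝ (Submodule.span ℝ (stableSet 𝔸 (T^[n] x))) := by
  let V x := stableSubspace fun n => Matrix.toEuclideanCLM (𝕜 := ℝ) (𝔸 n x)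
  have h_span x : Submodule.span ℝ (stableSet 𝔸 x) = V x := by
    rw [stableSet_eq_stableSubspace]; exact Submodule.span_eq _
  have h_comap x :
      V x = (V (T x)).comap (Matrix.toEuclideanCLM (𝕜 := ℝ) (𝔸 1 x) : _ →ₗ[ℝ] _) :=
    stableSubspace_eq_comap _ fun n => by
      rw [add_comm, hcoc x 1 n, map_mul, Function.iterate_one, ContinuousLinearMap.mul_def]
  have h_anti x : finrank ℝ (V (T x)) ≤ finrank ℝ (V x) :=
    h_comap x ▸ Submodule.finrank_le_finrank_comap _ _
  have h_meas : Measurable fun x => finrank ℝ (V x) :=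
    measurable_finrank_stableSubspace fun n =>
      measurable_norm_toEuclideanCLM_apply (hmeas.comp measurable_prodMk_left)
  filter_upwards [hT.ae_forall_iterate_eq_of_comp_le h_meas h_anti] with x hx n _
  rw [h_span, h_span, hx n]

theorem stmt9 {X : Type*} [MeasurableSpace X] {d : ℕ}
    (T : X → X) (hTmeas : Measurable T)
    (𝔸 : ℕ → X → Matrix (Fin d) (Fin d) ℝ)
    (hmeas : Measurable fun p : ℕ × X => 𝔸 p.1 p.2)
    (hcoc0 : ∀ x, 𝔸 0 x = 1)
    (hcoc : ∀ x m n, 𝔸 (m + n) x = 𝔸 n (T^[m] x) * 𝔸 m x)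
    (μ : Measure X) [IsProbabilityMeasure μ] (hT : MeasurePreserving T μ μ) :
    ∀ᵐ x ∂μ, ∀ n : ℕ, 1 ≤ n →
      Module.finrank ℝ (Submodule.span ℝ (stableSet 𝔸 x)) =
        Module.finrank ℝ (Submodule.span ℝ (stableSet 𝔸 (T^[n] x))) :=
  stmt9_general T 𝔸 hmeas hcoc μ hT

end
end
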